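/- A finite-dimensional nilpotent Lie algebra g is of class T if and only if there exist an integer k ≥ 0 and an indecomposable nilpotent Lie algebra g₀ of class T such that g is isomorphic to a_k × g₀, where a_k is the k-dimensional abelian Lie algebra. -/

import Mathlib

open Module

/-- The product of two Lie rings. -/
instance prodLieRing {L₁ L₂ : Type*} [LieRing L₁] [LieRing L₂] : LieRing (L₁ × L₂) where
  bracket x y := (⁅x.1, y.1⁆, ⁅x.2, y.2⁆)
  add_lie x y z := by ext <;> simp [add_lie]
  lie_add x y z := by ext <;> simp [lie_add]
  lie_self x := by ext <;> simp
  leibniz_lie x y z := by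
    ext
    · exact leibniz_lie x.1 y.1 z.1
    · exact leibniz_lie x.2 y.2 z.2

/-- The product of two Lie algebras. -/
instance prodLieAlgebra {L₁ L₂ : Type*} [LieRing L₁] [LieRing L₂]
    [LieAlgebra ℝ L₁] [LieAlgebra ℝ L₂] : LieAlgebra ℝ (L₁ × L₂) where
  lie_smul t x y := by
    ext
    · exact lie_smul t x.1 y.1
    · exact lie_smul t x.2 y.2

/-- The coadjoint isotropy subalgebra `g(ξ) = {X ∈ g : ξ([X,Y]) = 0 for all Y}`. -/
noncomputable def coadjointIsotropy {L : Type*} [LieRing L] [LieAlgebra ℝ L]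
    (ξ : Module.Dual ℝ L) : Submodule ℝ L where
  carrier := {X | ∀ Y : L, ξ ⁅X, Y⁆ = 0}
  add_mem' := by
    intro a b ha hb Y
    simp [add_lie, ha Y, hb Y]
  zero_mem' := by intro Y; simp
  smul_mem' := by
    intro c a ha Y
    simp [smul_lie, ha Y]

/-- `ind g := min {dim g(ξ) : ξ ∈ g*}`. -/
noncomputable def lieIndex (L : Type*) [LieRing L] [LieAlgebra ℝ L] : ℕ :=
  sInf (Set.range fun ξ : Module.Dual ℝ L => finrank ℝ (coadjointIsotropy ξ))

/-- `g` is of class `T` if `dim g(ξ) = ind g` for every `ξ ∈ g*` not vanishing on `[g,g]`. -/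
def IsClassT (L : Type*) [LieRing L] [LieAlgebra ℝ L] : Prop :=
  ∀ ξ : Module.Dual ℝ L,
    ¬ (∀ x ∈ LieAlgebra.derivedSeries ℝ L 1, ξ x = 0) →
      finrank ℝ (coadjointIsotropy ξ) = lieIndex L

/-- A bundled finite-dimensional real Lie algebra. -/
structure FinLieAlg where
  carrier : Type
  [ring : LieRing carrier]
  [alg : LieAlgebra ℝ carrier]
  [fin : FiniteDimensional ℝ carrier]

attribute [instance] FinLieAlg.ring FinLieAlg.alg FinLieAlg.fin

/-- A Lie algebra is indecomposable if it is not isomorphic to a direct product of two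
Lie algebras each of positive dimension. -/
def FinLieAlg.Indecomposable (P : FinLieAlg) : Prop :=
  ¬ ∃ (Q R : FinLieAlg), 0 < finrank ℝ Q.carrier ∧ 0 < finrank ℝ R.carrier ∧
      Nonempty (P.carrier ≃ₗ⁅ℝ⁆ Q.carrier × R.carrier)

/-!
The coadjoint isotropy of a functional `ξ₁.coprod ξ₂` on `g₁ × g₂` is the product of the
isotropies of `ξ₁` and `ξ₂`, so isotropy dimensions and the index are additive. On an abelian
factor every isotropy is the whole algebra, so splitting off an abelian factor neither creates
nor destroys class `T`. If both factors were non-abelian, pick `ξ₁` not vanishing on `[g₁, g₁]`: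
then `ξ₁.coprod 0` does not vanish on the derived algebra, yet its isotropy has dimension
`dim g₁(ξ₁) + dim g₂ > ind g₁ + ind g₂`. So every decomposition of a class `T` algebra has an
abelian factor, and induction on the dimension splits off abelian factors until an
indecomposable one is left; it is nilpotent as a quotient of `g`.
-/

open LieAlgebra

namespace Submodule

variable {R M₁ M₂ : Type*} [Semiring R] [AddCommMonoid M₁] [Module R M₁] [AddCommMonoid M₂]
  [Module R M₂]

def prodEquiv (p : Submodule R M₁) (q : Submodule R M₂) : p.prod q ≃ₗ[R] p × q where
  toFun x := (⟨x.1.1, x.2.1⟩, ⟨x.1.2, x.2.2⟩)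
  invFun y := ⟨(y.1, y.2), y.1.2, y.2.2⟩
  left_inv _ := rfl
  right_inv _ := rfl
  map_add' _ _ := rfl
  map_smul' _ _ := rfl

lemma finrank_prod {K V₁ V₂ : Type*} [DivisionRing K] [AddCommGroup V₁] [Module K V₁]
    [AddCommGroup V₂] [Module K V₂] [FiniteDimensional K V₁] [FiniteDimensional K V₂]
    (p : Submodule K V₁) (q : Submodule K V₂) :
    finrank K (p.prod q) = finrank K p + finrank K q := by
  rw [(prodEquiv p q).finrank_eq, Module.finrank_prod]

end Submodule

section Isotropy

variable {L : Type*} [LieRing L] [LieAlgebra ℝ L]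

@[simp]
lemma mem_coadjointIsotropy {ξ : Dual ℝ L} {x : L} :
    x ∈ coadjointIsotropy ξ ↔ ∀ y : L, ξ ⁅x, y⁆ = 0 :=
  Iff.rfl

lemma coadjointIsotropy_eq_top_iff (ξ : Dual ℝ L) :
    coadjointIsotropy ξ = ⊤ ↔ ∀ x ∈ derivedSeries ℝ L 1, ξ x = 0 := by
  have hspan : LieSubmodule.toSubmodule (derivedSeries ℝ L 1) =
      Submodule.span ℝ {z | ∃ x y : L, ⁅x, y⁆ = z} := by
    rw [derivedSeries_def, derivedSeriesOfIdeal_succ, derivedSeriesOfIdeal_zero,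
      LieSubmodule.lieIdeal_oper_eq_linear_span']
    simp
  calc coadjointIsotropy ξ = ⊤ ↔ ∀ x y : L, ξ ⁅x, y⁆ = 0 := by
        simp [Submodule.eq_top_iff']
    _ ↔ Submodule.span ℝ {z | ∃ x y : L, ⁅x, y⁆ = z} ≤ LinearMap.ker ξ := by
        rw [Submodule.span_le]
        exact ⟨fun h _ ⟨x, y, hz⟩ => hz ▸ h x y, fun h x y => h ⟨x, y, rfl⟩⟩
    _ ↔ ∀ x ∈ derivedSeries ℝ L 1, ξ x = 0 := by
        rw [← hspan]; rfl

lemma isClassT_iff : IsClassT L ↔ ∀ ξ : Dual ℝ L,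
    coadjointIsotropy ξ ≠ ⊤ → finrank ℝ (coadjointIsotropy ξ) = lieIndex L := by
  simp only [IsClassT, ne_eq, coadjointIsotropy_eq_top_iff]

lemma lieIndex_le (ξ : Dual ℝ L) : lieIndex L ≤ finrank ℝ (coadjointIsotropy ξ) :=
  Nat.sInf_le ⟨ξ, rfl⟩

lemma exists_finrank_coadjointIsotropy_eq_lieIndex :
    ∃ ξ : Dual ℝ L, finrank ℝ (coadjointIsotropy ξ) = lieIndex L :=
  Nat.sInf_mem (Set.range_nonempty _)

lemma coadjointIsotropy_eq_top [IsLieAbelian L] (ξ : Dual ℝ L) : coadjointIsotropy ξ = ⊤ := by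
  simp [Submodule.eq_top_iff', trivial_lie_zero]

lemma lieIndex_eq_finrank [IsLieAbelian L] : lieIndex L = finrank ℝ L := by
  obtain ⟨ξ, hξ⟩ := exists_finrank_coadjointIsotropy_eq_lieIndex (L := L)
  rw [← hξ, coadjointIsotropy_eq_top, finrank_top]

lemma exists_coadjointIsotropy_ne_top (h : ¬ IsLieAbelian L) :
    ∃ ξ : Dual ℝ L, coadjointIsotropy ξ ≠ ⊤ := by
  by_contra! htop
  refine h ⟨fun x y => (forall_dual_apply_eq_zero_iff ℝ _).mp fun ξ => ?_⟩
  exact (htop ξ ▸ Submodule.mem_top : x ∈ coadjointIsotropy ξ) y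

lemma lieIndex_lt_finrank [FiniteDimensional ℝ L] (h : ¬ IsLieAbelian L) :
    lieIndex L < finrank ℝ L := by
  obtain ⟨ξ, hξ⟩ := exists_coadjointIsotropy_ne_top h
  exact (lieIndex_le ξ).trans_lt (Submodule.finrank_lt hξ)

end Isotropy

section Transport

variable {L₁ L₂ : Type*} [LieRing L₁] [LieRing L₂] [LieAlgebra ℝ L₁] [LieAlgebra ℝ L₂]

lemma coadjointIsotropy_dualMap (e : L₁ ≃ₗ⁅ℝ⁆ L₂) (ξ : Dual ℝ L₂) :
    coadjointIsotropy (e.toLinearEquiv.dualMap ξ) =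
      (coadjointIsotropy ξ).comap (e.toLinearEquiv : L₁ →ₗ[ℝ] L₂) := by
  ext x
  simp only [mem_coadjointIsotropy, LinearEquiv.dualMap_apply, Submodule.mem_comap,
    LinearEquiv.coe_coe, LieEquiv.coe_toLinearEquiv, LieEquiv.map_lie]
  exact (e.surjective.forall (p := fun y => ξ ⁅e x, y⁆ = 0)).symm

lemma finrank_coadjointIsotropy_dualMap (e : L₁ ≃ₗ⁅ℝ⁆ L₂) (ξ : Dual ℝ L₂) :
    finrank ℝ (coadjointIsotropy (e.toLinearEquiv.dualMap ξ)) =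
      finrank ℝ (coadjointIsotropy ξ) := by
  rw [coadjointIsotropy_dualMap, Submodule.comap_equiv_eq_map_symm, LinearEquiv.finrank_map_eq]

lemma lieIndex_congr (e : L₁ ≃ₗ⁅ℝ⁆ L₂) : lieIndex L₁ = lieIndex L₂ := by
  unfold lieIndex
  rw [← e.toLinearEquiv.dualMap.surjective.range_comp]
  simp only [Function.comp_def, finrank_coadjointIsotropy_dualMap]

lemma IsClassT.of_lieEquiv (h : IsClassT L₁) (e : L₁ ≃ₗ⁅ℝ⁆ L₂) : IsClassT L₂ := by
  rw [isClassT_iff] at h ⊢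
  intro ξ hξ
  have hξ' : coadjointIsotropy (e.toLinearEquiv.dualMap ξ) ≠ ⊤ := by
    rw [coadjointIsotropy_dualMap, ← Submodule.comap_top (e.toLinearEquiv : L₁ →ₗ[ℝ] L₂)]
    exact fun htop => hξ (Submodule.comap_injective_of_surjective e.toLinearEquiv.surjective htop)
  rw [← finrank_coadjointIsotropy_dualMap e, h _ hξ', lieIndex_congr e]

end Transport

section Prod

variable {L₁ L₂ : Type*} [LieRing L₁] [LieRing L₂] [LieAlgebra ℝ L₁] [LieAlgebra ℝ L₂]

lemma coadjointIsotropy_coprod (ξ₁ : Dual ℝ L₁) (ξ₂ : Dual ℝ L₂) :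
    coadjointIsotropy (ξ₁.coprod ξ₂) = (coadjointIsotropy ξ₁).prod (coadjointIsotropy ξ₂) := by
  ext ⟨a, b⟩
  simp only [mem_coadjointIsotropy, Submodule.mem_prod]
  constructor
  · intro h
    exact ⟨fun y => by simpa using h (y, 0), fun y => by simpa using h (0, y)⟩
  · rintro ⟨h₁, h₂⟩ ⟨y₁, y₂⟩
    simp [h₁ y₁, h₂ y₂]

variable [FiniteDimensional ℝ L₁] [FiniteDimensional ℝ L₂]

lemma finrank_coadjointIsotropy_coprod (ξ₁ : Dual ℝ L₁) (ξ₂ : Dual ℝ L₂) :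
    finrank ℝ (coadjointIsotropy (ξ₁.coprod ξ₂)) =
      finrank ℝ (coadjointIsotropy ξ₁) + finrank ℝ (coadjointIsotropy ξ₂) := by
  rw [coadjointIsotropy_coprod, Submodule.finrank_prod]

lemma lieIndex_prod : lieIndex (L₁ × L₂) = lieIndex L₁ + lieIndex L₂ := by
  obtain ⟨ξ₁, h₁⟩ := exists_finrank_coadjointIsotropy_eq_lieIndex (L := L₁)
  obtain ⟨ξ₂, h₂⟩ := exists_finrank_coadjointIsotropy_eq_lieIndex (L := L₂)
  obtain ⟨ξ, hξ⟩ := exists_finrank_coadjointIsotropy_eq_lieIndex (L := L₁ × L₂)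
  rw [← LinearMap.coprod_comp_inl_inr ξ, finrank_coadjointIsotropy_coprod] at hξ
  refine le_antisymm ?_ ?_
  · rw [← h₁, ← h₂, ← finrank_coadjointIsotropy_coprod]
    exact lieIndex_le _
  · rw [← hξ]
    exact add_le_add (lieIndex_le _) (lieIndex_le _)

lemma isClassT_prod_iff : IsClassT (L₁ × L₂) ↔ ∀ (ξ₁ : Dual ℝ L₁) (ξ₂ : Dual ℝ L₂),
    coadjointIsotropy ξ₁ ≠ ⊤ ∨ coadjointIsotropy ξ₂ ≠ ⊤ →
      finrank ℝ (coadjointIsotropy ξ₁) + finrank ℝ (coadjointIsotropy ξ₂) =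
        lieIndex L₁ + lieIndex L₂ := by
  rw [isClassT_iff, (LinearMap.coprodEquiv ℝ).toEquiv.symm.forall_congr_left, Prod.forall]
  simp only [Equiv.symm_symm, LinearEquiv.coe_toEquiv, LinearMap.coprodEquiv_apply,
    coadjointIsotropy_coprod, ne_eq, Submodule.prod_eq_top_iff, not_and_or,
    ← finrank_coadjointIsotropy_coprod, lieIndex_prod]
  exact Iff.rfl

lemma isClassT_prod_iff_of_isLieAbelian [IsLieAbelian L₁] : IsClassT (L₁ × L₂) ↔ IsClassT L₂ := by
  have hfin (ξ₁ : Dual ℝ L₁) : finrank ℝ (coadjointIsotropy ξ₁) = lieIndex L₁ := by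
    rw [coadjointIsotropy_eq_top, finrank_top, lieIndex_eq_finrank]
  rw [isClassT_prod_iff, isClassT_iff]
  simp only [hfin, coadjointIsotropy_eq_top, ne_eq, not_true_eq_false, false_or, add_right_inj]
  exact ⟨fun h => h 0, fun h _ => h⟩

lemma IsClassT.isLieAbelian_or_isLieAbelian (h : IsClassT (L₁ × L₂)) :
    IsLieAbelian L₁ ∨ IsLieAbelian L₂ := by
  by_contra! hna
  obtain ⟨ξ₁, hξ₁⟩ := exists_coadjointIsotropy_ne_top hna.1
  have hzero : coadjointIsotropy (0 : Dual ℝ L₂) = ⊤ := by simp [Submodule.eq_top_iff']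
  have hT := isClassT_prod_iff.mp h ξ₁ 0 (Or.inl hξ₁)
  rw [hzero, finrank_top] at hT
  have := lieIndex_le ξ₁
  have := lieIndex_lt_finrank hna.2
  omega

end Prod

instance {L₁ L₂ : Type*} [LieRing L₁] [LieRing L₂] [LieAlgebra ℝ L₁] [LieAlgebra ℝ L₂]
    [IsLieAbelian L₁] [IsLieAbelian L₂] : IsLieAbelian (L₁ × L₂) :=
  ⟨fun x y => Prod.ext (trivial_lie_zero L₁ L₁ x.1 y.1) (trivial_lie_zero L₂ L₂ x.2 y.2)⟩

namespace LieEquiv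

variable {L₁ L₂ L₃ L₄ : Type*} [LieRing L₁] [LieRing L₂] [LieRing L₃] [LieRing L₄]
  [LieAlgebra ℝ L₁] [LieAlgebra ℝ L₂] [LieAlgebra ℝ L₃] [LieAlgebra ℝ L₄]

def prodCongr (e₁ : L₁ ≃ₗ⁅ℝ⁆ L₂) (e₂ : L₃ ≃ₗ⁅ℝ⁆ L₄) : (L₁ × L₃) ≃ₗ⁅ℝ⁆ L₂ × L₄ :=
  { e₁.toLinearEquiv.prodCongr e₂.toLinearEquiv with
    map_lie' := fun {x y} => Prod.ext (e₁.map_lie x.1 y.1) (e₂.map_lie x.2 y.2) }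

def prodAssoc : ((L₁ × L₂) × L₃) ≃ₗ⁅ℝ⁆ L₁ × L₂ × L₃ :=
  { LinearEquiv.prodAssoc ℝ L₁ L₂ L₃ with map_lie' := rfl }

def uniqueProd [Unique L₁] : (L₁ × L₂) ≃ₗ⁅ℝ⁆ L₂ :=
  { LinearEquiv.uniqueProd with map_lie' := rfl }

end LieEquiv

instance : LieRing PUnit where
  bracket _ _ := PUnit.unit
  add_lie _ _ _ := rfl
  lie_add _ _ _ := rfl
  lie_self _ := rfl
  leibniz_lie _ _ _ := rfl

instance : LieAlgebra ℝ PUnit where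
  lie_smul _ _ _ := rfl

instance : IsLieAbelian PUnit :=
  ⟨fun _ _ => rfl⟩

lemma FinLieAlg.exists_abelian_prod_indecomposable (M : FinLieAlg) (hM : IsClassT M.carrier) :
    ∃ A P : FinLieAlg, IsLieAbelian A.carrier ∧ P.Indecomposable ∧ IsClassT P.carrier ∧
      Nonempty (M.carrier ≃ₗ⁅ℝ⁆ A.carrier × P.carrier) := by
  induction hn : finrank ℝ M.carrier using Nat.strong_induction_on generalizing M with
  | _ n ih =>
  by_cases hind : M.Indecomposable
  · exact ⟨⟨PUnit⟩, M, inferInstance, hind, hM, ⟨LieEquiv.uniqueProd.symm⟩⟩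
  obtain ⟨Q, R, hQ, hR, ⟨eQR⟩⟩ := not_not.mp hind
  obtain ⟨A, B, hA, hAdim, ⟨e⟩⟩ : ∃ A B : FinLieAlg, IsLieAbelian A.carrier ∧
      0 < finrank ℝ A.carrier ∧ Nonempty (M.carrier ≃ₗ⁅ℝ⁆ A.carrier × B.carrier) := by
    rcases (hM.of_lieEquiv eQR).isLieAbelian_or_isLieAbelian with hQab | hRab
    · exact ⟨Q, R, hQab, hQ, ⟨eQR⟩⟩
    · exact ⟨R, Q, hRab, hR, ⟨eQR.trans (LieEquiv.prodComm ℝ _ _)⟩⟩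
  have hBdim : finrank ℝ B.carrier < n := by
    rw [← hn, e.toLinearEquiv.finrank_eq, finrank_prod]
    omega
  have hB : IsClassT B.carrier := isClassT_prod_iff_of_isLieAbelian.mp (hM.of_lieEquiv e)
  obtain ⟨A', P, hA', hP, hPT, ⟨e'⟩⟩ := ih _ hBdim B hB rfl
  exact ⟨⟨A.carrier × A'.carrier⟩, P, inferInstance, hP, hPT,
    ⟨e.trans ((LieEquiv.prodCongr LieEquiv.refl e').trans LieEquiv.prodAssoc.symm)⟩⟩

/-- A finite-dimensional nilpotent Lie algebra is of class `T` iff it is isomorphic to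
`a_k × g₀` with `a_k` abelian of dimension `k` and `g₀` indecomposable of class `T`. -/
theorem stmt_6 {L : Type} [LieRing L] [LieAlgebra ℝ L] [FiniteDimensional ℝ L]
    (hnil : LieRing.IsNilpotent L) :
    IsClassT L ↔
      ∃ (k : ℕ) (A P : FinLieAlg),
        IsLieAbelian A.carrier ∧ finrank ℝ A.carrier = k ∧
        LieRing.IsNilpotent P.carrier ∧ P.Indecomposable ∧ IsClassT P.carrier ∧
        Nonempty (L ≃ₗ⁅ℝ⁆ A.carrier × P.carrier) := by
  constructor
  · intro hT
    obtain ⟨A, P, hA, hP, hPT, ⟨e⟩⟩ := FinLieAlg.exists_abelian_prod_indecomposable ⟨L⟩ hT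
    have hPnil : LieRing.IsNilpotent P.carrier :=
      Function.Surjective.lieAlgebra_isNilpotent (R := ℝ)
        (f := (LieHom.snd ℝ A.carrier P.carrier).comp e.toLieHom)
        ((LieHom.snd_surjective (R := ℝ)).comp e.surjective)
    exact ⟨_, A, P, hA, rfl, hPnil, hP, hPT, ⟨e⟩⟩
  · rintro ⟨-, A, P, hA, -, -, -, hPT, ⟨e⟩⟩
    exact (isClassT_prod_iff_of_isLieAbelian.mpr hPT).of_lieEquiv e.symm
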